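/- arXiv:math/0702551 — 2 statements merged into one kernel-verified Lean document; each statement's English description precedes it below -/
import Mathlib

section
/- For $n \ge 1$, let $F_n := \{(\tfrac{i}{n}, 0) : i \in \mathbb{Z}, -n \le i \le n\} \cup \{(\tfrac{1}{n}(1 + \tfrac{j}{2^n}), \tfrac{1}{n}(1 + \tfrac{j}{2^n})) : 0 \le j \le 2^n\}$, a set of $k_n = 2^n + 2n + 2$ distinct points in $\mathbb{R}^2$. Then the least squares slope $m_n$ of $F_n$ converges to $1$ as $n \to \infty$ (even though $F_n$ converges in the Hausdorff metric to the segment $[-1,1] \times \{0\}$, whose slope is $0$). -/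
/-!
The grid points lie on the x-axis with abscissae summing to `0`, and the bump points lie on the
diagonal. Hence the slope is `V / (V + B)`, where `B = ∑ (i/n)² ≤ 2n + 1` is the contribution of
the grid and `V` is at least the sum of squared deviations of the `2ⁿ + 1` bump abscissae. These
form an arithmetic progression of step `1/(n 2ⁿ)`, so `V ≥ 2ⁿ/(12 n²)`, and
`|m_n - 1| ≤ B / V = O(n³/2ⁿ)`.
-/

open Filter Set

/-- The point set of Example 5.1: grid points `(i/n, 0)`, `-n ≤ i ≤ n`, together with
the diagonal bump `((1/n)(1 + j/2ⁿ), (1/n)(1 + j/2ⁿ))`, `0 ≤ j ≤ 2ⁿ`. -/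
noncomputable def exampleFn (n : ℕ) : Finset (ℝ × ℝ) :=
  (Finset.Icc (-(n : ℤ)) (n : ℤ)).image (fun i : ℤ => ((i : ℝ) / (n : ℝ), (0 : ℝ))) ∪
  (Finset.range (2 ^ n + 1)).image (fun j : ℕ =>
    ((1 / (n : ℝ)) * (1 + (j : ℝ) / 2 ^ n), (1 / (n : ℝ)) * (1 + (j : ℝ) / 2 ^ n)))

/-- The least squares slope through a finite set of points in `ℝ²`. -/
noncomputable def lsSlope (A : Finset (ℝ × ℝ)) : ℝ :=
  (∑ p ∈ A, (p.2 - (∑ q ∈ A, q.2) / (A.card : ℝ)) *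
      (p.1 - (∑ q ∈ A, q.1) / (A.card : ℝ))) /
  (∑ p ∈ A, (p.1 - (∑ q ∈ A, q.1) / (A.card : ℝ)) ^ 2)

open Finset

theorem Finset.sum_sub_mean_mul_sub_mean {ι : Type*} (s : Finset ι) (f g : ι → ℝ) :
    ∑ i ∈ s, (f i - (∑ j ∈ s, f j) / #s) * (g i - (∑ j ∈ s, g j) / #s) =
      ∑ i ∈ s, f i * g i - (∑ i ∈ s, f i) * (∑ i ∈ s, g i) / #s := by
  rcases s.eq_empty_or_nonempty with rfl | hs
  · simp
  have hcard : (#s : ℝ) ≠ 0 := by positivity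
  simp only [sub_mul, mul_sub, sum_sub_distrib, ← sum_mul, ← mul_sum, sum_const, nsmul_eq_mul]
  field_simp
  ring

theorem lsSlope_eq (A : Finset (ℝ × ℝ)) :
    lsSlope A = (∑ p ∈ A, p.2 * p.1 - (∑ p ∈ A, p.2) * (∑ p ∈ A, p.1) / #A) /
      (∑ p ∈ A, p.1 ^ 2 - (∑ p ∈ A, p.1) ^ 2 / #A) := by
  simp only [lsSlope, sq, sum_sub_mean_mul_sub_mean]

theorem lsSlope_union_of_axis_of_diagonal {G D : Finset (ℝ × ℝ)} (hGD : Disjoint G D)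
    (hG : ∀ p ∈ G, p.2 = 0) (hD : ∀ p ∈ D, p.2 = p.1) (hG₀ : ∑ p ∈ G, p.1 = 0) :
    lsSlope (G ∪ D) =
      (∑ p ∈ D, p.1 ^ 2 - (∑ p ∈ D, p.1) ^ 2 / #(G ∪ D)) /
        (∑ p ∈ D, p.1 ^ 2 - (∑ p ∈ D, p.1) ^ 2 / #(G ∪ D) + ∑ p ∈ G, p.1 ^ 2) := by
  have hGy : ∑ p ∈ G, p.2 = 0 := sum_eq_zero hG
  have hGxy : ∑ p ∈ G, p.2 * p.1 = 0 := sum_eq_zero fun p hp => by rw [hG p hp, zero_mul]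
  have hDy : ∑ p ∈ D, p.2 = ∑ p ∈ D, p.1 := sum_congr rfl hD
  have hDxy : ∑ p ∈ D, p.2 * p.1 = ∑ p ∈ D, p.1 ^ 2 :=
    sum_congr rfl fun p hp => by rw [hD p hp, sq]
  rw [lsSlope_eq]
  simp only [sum_union hGD, hGy, hGxy, hDy, hDxy, hG₀]
  ring

theorem abs_div_add_sub_one_le {a b : ℝ} (ha : 0 < a) (hb : 0 ≤ b) :
    |a / (a + b) - 1| ≤ b / a := by
  have hab : a / (a + b) - 1 = -(b / (a + b)) := by field_simp; ring
  rw [hab, abs_neg, abs_of_nonneg (by positivity)]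
  exact div_le_div_of_nonneg_left hb ha (by linarith)

theorem sum_range_natCast (N : ℕ) : ∑ j ∈ range (N + 1), (j : ℝ) = N * (N + 1) / 2 := by
  induction N with
  | zero => simp
  | succ k ih => rw [sum_range_succ, ih]; push_cast; ring

theorem sum_range_natCast_sq (N : ℕ) :
    ∑ j ∈ range (N + 1), (j : ℝ) ^ 2 = N * (N + 1) * (2 * N + 1) / 6 := by
  induction N with
  | zero => simp
  | succ k ih => rw [sum_range_succ, ih]; push_cast; ring

theorem sum_sq_sub_sq_sum_div_arithProg (a h : ℝ) (N : ℕ) :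
    ∑ j ∈ range (N + 1), (a + h * j) ^ 2 - (∑ j ∈ range (N + 1), (a + h * j)) ^ 2 / (N + 1) =
      h ^ 2 * N * (N + 1) * (N + 2) / 12 := by
  have hsq : ∀ j : ℕ, (a + h * j) ^ 2 = a ^ 2 + 2 * a * h * j + h ^ 2 * (j : ℝ) ^ 2 :=
    fun j => by ring
  simp only [hsq, sum_add_distrib, sum_const, card_range, nsmul_eq_mul, ← mul_sum,
    sum_range_natCast, sum_range_natCast_sq]
  push_cast
  field_simp
  ring

theorem sum_Icc_neg_intCast_eq_zero (m : ℤ) : ∑ i ∈ Icc (-m) m, (i : ℝ) = 0 :=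
  sum_involution (fun i _ => -i) (fun i _ => by push_cast; ring)
    (fun i _ hi h => hi (by exact_mod_cast (by omega : i = 0)))
    (fun i hi => by simp only [Finset.mem_Icc] at hi ⊢; omega) (fun i _ => neg_neg i)

noncomputable def exampleGrid (n : ℕ) : Finset (ℝ × ℝ) :=
  (Finset.Icc (-(n : ℤ)) n).image fun i : ℤ => ((i : ℝ) / n, 0)

noncomputable def exampleDiagCoord (n j : ℕ) : ℝ :=
  1 / n * (1 + j / 2 ^ n)

noncomputable def exampleDiag (n : ℕ) : Finset (ℝ × ℝ) :=
  (range (2 ^ n + 1)).image fun j => (exampleDiagCoord n j, exampleDiagCoord n j)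

theorem exampleFn_eq (n : ℕ) : exampleFn n = exampleGrid n ∪ exampleDiag n := rfl

theorem snd_eq_zero_of_mem_exampleGrid {n : ℕ} {p : ℝ × ℝ} (hp : p ∈ exampleGrid n) :
    p.2 = 0 := by
  obtain ⟨i, -, rfl⟩ := mem_image.1 hp
  rfl

theorem snd_eq_fst_of_mem_exampleDiag {n : ℕ} {p : ℝ × ℝ} (hp : p ∈ exampleDiag n) :
    p.2 = p.1 := by
  obtain ⟨j, -, rfl⟩ := mem_image.1 hp
  rfl

theorem exampleDiagCoord_pos {n : ℕ} (hn : 0 < n) (j : ℕ) : 0 < exampleDiagCoord n j := by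
  unfold exampleDiagCoord
  positivity

theorem exampleDiagCoord_eq (n j : ℕ) :
    exampleDiagCoord n j = 1 / n + 1 / (n * 2 ^ n) * j := by
  unfold exampleDiagCoord
  field_simp

theorem exampleDiagCoord_injective {n : ℕ} (hn : 0 < n) :
    Function.Injective (exampleDiagCoord n) := fun i j hij => by
  have hn' : (n : ℝ) ≠ 0 := by positivity
  simp only [exampleDiagCoord_eq] at hij
  field_simp at hij
  exact_mod_cast add_left_cancel hij

theorem disjoint_exampleGrid_exampleDiag {n : ℕ} (hn : 0 < n) :
    Disjoint (exampleGrid n) (exampleDiag n) := by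
  refine disjoint_left.2 fun p hG hD => ?_
  obtain ⟨j, -, rfl⟩ := mem_image.1 hD
  exact (exampleDiagCoord_pos hn j).ne' (snd_eq_zero_of_mem_exampleGrid hG)

theorem injective_exampleGrid_point {n : ℕ} (hn : 0 < n) :
    Function.Injective fun i : ℤ => ((i : ℝ) / n, (0 : ℝ)) := fun i j hij => by
  have hn' : (n : ℝ) ≠ 0 := by positivity
  have h := congrArg Prod.fst hij
  field_simp at h
  exact_mod_cast h

theorem card_exampleGrid {n : ℕ} (hn : 0 < n) : #(exampleGrid n) = 2 * n + 1 := by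
  rw [exampleGrid, Finset.card_image_of_injective _ (injective_exampleGrid_point hn), Int.card_Icc]
  omega

theorem card_exampleDiag {n : ℕ} (hn : 0 < n) : #(exampleDiag n) = 2 ^ n + 1 := by
  rw [exampleDiag, Finset.card_image_of_injective _ fun i j hij => exampleDiagCoord_injective hn
    (congrArg Prod.fst hij), card_range]

theorem card_exampleFn {n : ℕ} (hn : 0 < n) : #(exampleFn n) = 2 ^ n + 2 * n + 2 := by
  rw [exampleFn_eq, card_union_of_disjoint (disjoint_exampleGrid_exampleDiag hn),
    card_exampleGrid hn, card_exampleDiag hn]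
  ring

theorem sum_exampleGrid_fst {n : ℕ} (hn : 0 < n) : ∑ p ∈ exampleGrid n, p.1 = 0 := by
  rw [exampleGrid, sum_image fun i _ j _ hij => injective_exampleGrid_point hn hij, ← sum_div,
    sum_Icc_neg_intCast_eq_zero, zero_div]

theorem sum_exampleGrid_fst_sq_le (n : ℕ) : ∑ p ∈ exampleGrid n, p.1 ^ 2 ≤ 2 * n + 1 := by
  calc ∑ p ∈ exampleGrid n, p.1 ^ 2 ≤ #(exampleGrid n) • (1 : ℝ) := by
        refine sum_le_card_nsmul _ _ _ fun p hp => ?_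
        obtain ⟨i, hi, rfl⟩ := mem_image.1 hp
        rw [Finset.mem_Icc, ← abs_le] at hi
        rw [sq_le_one_iff_abs_le_one, abs_div, Nat.abs_cast]
        exact div_le_one_of_le₀ (by exact_mod_cast hi) n.cast_nonneg
    _ ≤ 2 * n + 1 := by
        rw [nsmul_one]
        exact_mod_cast card_image_le.trans_eq (by rw [Int.card_Icc]; omega)

theorem sum_exampleDiag_fst_sq_sub {n : ℕ} (hn : 0 < n) :
    ∑ p ∈ exampleDiag n, p.1 ^ 2 - (∑ p ∈ exampleDiag n, p.1) ^ 2 / #(exampleDiag n) =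
      (1 / (n * 2 ^ n)) ^ 2 * 2 ^ n * (2 ^ n + 1) * (2 ^ n + 2) / 12 := by
  have hinj : Set.InjOn (fun j => (exampleDiagCoord n j, exampleDiagCoord n j))
      (Finset.range (2 ^ n + 1)) :=
    fun i _ j _ hij => exampleDiagCoord_injective hn (congrArg Prod.fst hij)
  rw [card_exampleDiag hn, exampleDiag, sum_image hinj, sum_image hinj]
  simp only [exampleDiagCoord_eq]
  exact_mod_cast sum_sq_sub_sq_sum_div_arithProg _ _ (2 ^ n)

theorem abs_lsSlope_exampleFn_sub_one_le {n : ℕ} (hn : 0 < n) :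
    |lsSlope (exampleFn n) - 1| ≤ 36 * n ^ 3 / 2 ^ n := by
  have hn' : (1 : ℝ) ≤ n := by exact_mod_cast hn
  set S := ∑ p ∈ exampleDiag n, p.1
  set V := ∑ p ∈ exampleDiag n, p.1 ^ 2 - S ^ 2 / #(exampleFn n)
  set B := ∑ p ∈ exampleGrid n, p.1 ^ 2
  have hdiag :
      2 ^ n / (12 * n ^ 2) ≤ ∑ p ∈ exampleDiag n, p.1 ^ 2 - S ^ 2 / #(exampleDiag n) := by
    rw [sum_exampleDiag_fst_sq_sub hn]
    field_simp
    nlinarith [pow_pos (two_pos (α := ℝ)) n]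
  have hcard : (#(exampleDiag n) : ℝ) ≤ #(exampleFn n) := by
    exact_mod_cast Finset.card_le_card (subset_union_right (s₁ := exampleGrid n))
  have hV : 2 ^ n / (12 * n ^ 2) ≤ V := hdiag.trans <| sub_le_sub_left
    (div_le_div_of_nonneg_left (sq_nonneg S) (by rw [card_exampleDiag hn]; positivity) hcard) _
  have hVpos : 0 < V := lt_of_lt_of_le (by positivity) hV
  rw [exampleFn_eq, lsSlope_union_of_axis_of_diagonal (disjoint_exampleGrid_exampleDiag hn)
    (fun p => snd_eq_zero_of_mem_exampleGrid) (fun p => snd_eq_fst_of_mem_exampleDiag)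
    (sum_exampleGrid_fst hn), ← exampleFn_eq]
  calc |V / (V + B) - 1| ≤ B / V :=
        abs_div_add_sub_one_le hVpos (sum_nonneg fun p _ => sq_nonneg _)
    _ ≤ (2 * n + 1) / (2 ^ n / (12 * n ^ 2)) :=
        div_le_div₀ (by positivity) (sum_exampleGrid_fst_sq_le n) (by positivity) hV
    _ ≤ 36 * n ^ 3 / 2 ^ n := by
        rw [div_div_eq_mul_div]
        gcongr ?_ / _
        nlinarith [mul_nonneg (sq_nonneg (n : ℝ)) (sub_nonneg.2 hn')]

/-- The sets `exampleFn n` consist of `2ⁿ + 2n + 2` distinct points,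
and their least squares slope converges to `1` as `n → ∞` (even though the sets
converge in the Hausdorff metric to the horizontal segment `[-1,1] × {0}`, of
slope `0`). -/
theorem example_lsSlope_tendsto_one :
    (∀ n : ℕ, 1 ≤ n → (exampleFn n).card = 2 ^ n + 2 * n + 2) ∧
    Tendsto (fun n => lsSlope (exampleFn n)) atTop (nhds 1) := by
  refine ⟨fun n hn => card_exampleFn hn, ?_⟩
  have hbound : Tendsto (fun n : ℕ => 36 * (n : ℝ) ^ 3 / 2 ^ n) atTop (nhds 0) := by
    simpa [mul_div_assoc] using
      (tendsto_pow_const_div_const_pow_of_one_lt 3 one_lt_two).const_mul (36 : ℝ)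
  rw [tendsto_iff_norm_sub_tendsto_zero]
  refine squeeze_zero' (Eventually.of_forall fun _ => norm_nonneg _) ?_ hbound
  filter_upwards [eventually_gt_atTop 0] with n hn using abs_lsSlope_exampleFn_sub_one_le hn
end

section
/- Let $X_1, X_2, \ldots$ be iid nonnegative random variables with distribution function $F$ whose tail is regularly varying with index $-\alpha$ ($\alpha > 0$), and let $X_{(1)} \ge \cdots \ge X_{(n)}$ be the order statistics of the first $n$ in decreasing order. Let $k = k(n) \to \infty$ with $k/n \to 0$. For $M > 1$ define the tail functional $T_{n,M} := \tfrac{1}{k}\sum_{i=1}^{n} \big(\log\tfrac{X_i}{X_{(k)}}\big)^2 \mathbf{1}\{X_i > M X_{(k)}\}$. Then for every $\eta > 0$, $\lim_{M \to \infty} \limsup_{n \to \infty} P\big[T_{n,M} > \eta\big] = 0$. -/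
/-!
Regular variation gives, beyond some `t₀`, the one-step bounds
`e^{-2α} ≤ (1 - F (t e)) / (1 - F t) ≤ e^{-α/2}`. Walking along the grid `t₀ e^j` one finds
a level `u = uₙ` with `2k < n (1 - F u) ≤ 2 e^{2α} k`. By Chebyshev's inequality, with
probability at least `1 - 2/k` at least `k` observations exceed `u`, so `X_(k) > u`. On that
event, once `M ≥ e^m`, each summand of `k T_{n,M}` is at most
`∑_{J ≥ m} (J + 1)² 1{X_i > u e^J}`, whose expectation is at most
`(1 - F u) ∑_{J ≥ m} (J + 1)² e^{-αJ/2}`. Markov's inequality then gives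
`P[T_{n,M} > η] ≤ 2/k + (2 e^{2α}/η) ∑_{J ≥ m} (J + 1)² e^{-αJ/2}`, which vanishes as
`n → ∞` and then `m → ∞`.
-/

open MeasureTheory Filter Set ProbabilityTheory

/-- `ord n j ω` (for `1 ≤ j ≤ n`) is the `j`-th largest among `X 1 ω, …, X n ω`:
decreasing in `j`, and a rearrangement of the first `n` sample values. -/
def IsDecOrderStat {Ω : Type*} (X : ℕ → Ω → ℝ) (ord : ℕ → ℕ → Ω → ℝ) : Prop :=
  ∀ ω n, (∀ i j, 1 ≤ i → i ≤ j → j ≤ n → ord n j ω ≤ ord n i ω) ∧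
    ∃ σ : Equiv.Perm (Fin n), ∀ i : Fin n, ord n (i.1 + 1) ω = X ((σ i).1 + 1) ω

/-- The distribution function `F` has a regularly varying tail with index `-α`:
`1 - F(x) = x^{-α} L(x)` with `L` slowly varying. -/
def RegVaryingTail (F : ℝ → ℝ) (α : ℝ) : Prop :=
  ∃ L : ℝ → ℝ, (∀ x > (0:ℝ), 1 - F x = x ^ (-α) * L x) ∧
    ∀ x > (0:ℝ), Tendsto (fun t => L (t * x) / L t) atTop (nhds 1)

open Real
open scoped ENNReal Topology Finset

theorem measure_lt_eq_ofReal_one_sub {Ω : Type*} [MeasurableSpace Ω] {μ : Measure Ω}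
    [IsProbabilityMeasure μ] {Y : Ω → ℝ} (hY : Measurable Y) {F : ℝ → ℝ}
    (hF : ∀ x, μ.real {ω | Y ω ≤ x} = F x) (x : ℝ) :
    μ {ω | x < Y ω} = ENNReal.ofReal (1 - F x) := by
  have hcompl : {ω | x < Y ω} = {ω | Y ω ≤ x}ᶜ := by ext; simp
  rw [hcompl, prob_compl_eq_one_sub (measurableSet_le hY measurable_const),
    ENNReal.ofReal_sub _ (hF x ▸ measureReal_nonneg), ENNReal.ofReal_one, ← hF x,
    ofReal_measureReal]

theorem measure_card_lt_le_of_iIndepFun {ι Ω : Type*} [MeasurableSpace Ω] {μ : Measure Ω}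
    [IsProbabilityMeasure μ] {X : ι → Ω → ℝ} (hmeas : ∀ i, Measurable (X i))
    (hindep : iIndepFun X μ) (s : Finset ι) (u : ℝ) {K : ℝ} (hK : 0 < K)
    (hsum : 2 * K ≤ ∑ i ∈ s, μ.real {ω | u < X i ω}) :
    μ {ω | (#{i ∈ s | u < X i ω} : ℝ) < K} ≤ ENNReal.ofReal (2 / K) := by
  have hg : Measurable ((Ioi u).indicator (1 : ℝ → ℝ)) :=
    measurable_const.indicator measurableSet_Ioi
  set B : ι → Ω → ℝ := fun i => (Ioi u).indicator 1 ∘ X i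
  have hB : ∀ i, MemLp (B i) 2 μ := fun i =>
    MemLp.of_bound (hg.comp (hmeas i)).aestronglyMeasurable 1 (ae_of_all _ fun ω => by
      by_cases h : u < X i ω <;> simp [B, h])
  have hEB : ∀ i, μ[B i] = μ.real {ω | u < X i ω} := fun i =>
    integral_indicator_one (measurableSet_Ioi.preimage (hmeas i))
  have hVB : ∀ i, Var[B i; μ] ≤ μ.real {ω | u < X i ω} := by
    intro i
    have hsq : B i ^ 2 = B i := by
      funext ω; by_cases h : u < X i ω <;> simp [B, h]
    calc Var[B i; μ] ≤ μ[B i ^ 2] := variance_le_expectation_sq (hB i).aestronglyMeasurable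
      _ = μ.real {ω | u < X i ω} := by rw [hsq, hEB]
  set N : Ω → ℝ := ∑ i ∈ s, B i
  have hN : ∀ ω, N ω = #{i ∈ s | u < X i ω} := fun ω => by
    simp only [N, B, Finset.sum_apply, Function.comp_apply, Set.indicator_apply, mem_Ioi,
      Pi.one_apply, Finset.sum_boole]
  have hEN : μ[N] = ∑ i ∈ s, μ.real {ω | u < X i ω} := by
    simp only [N, Finset.sum_apply]
    rw [integral_finsetSum s (fun i _ => (hB i).integrable one_le_two)]
    exact Finset.sum_congr rfl fun i _ => hEB i
  have hVN : Var[N; μ] ≤ μ[N] := by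
    rw [IndepFun.variance_sum (fun i _ => hB i)
      (fun i _ j _ hij => (hindep.comp _ fun _ => hg).indepFun hij), hEN]
    exact Finset.sum_le_sum fun i _ => hVB i
  have hsub : {ω | (#{i ∈ s | u < X i ω} : ℝ) < K} ⊆ {ω | μ[N] - K ≤ |N ω - μ[N]|} := by
    intro ω hω
    simp only [mem_ofPred_eq, ← hN] at hω ⊢
    rw [abs_sub_comm]
    exact (sub_le_sub_left hω.le _).trans (le_abs_self _)
  calc μ {ω | (#{i ∈ s | u < X i ω} : ℝ) < K}
      ≤ ENNReal.ofReal (Var[N; μ] / (μ[N] - K) ^ 2) :=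
        (measure_mono hsub).trans
          (meas_ge_le_variance_div_sq (memLp_finsetSum' s fun i _ => hB i) (by linarith))
    _ ≤ ENNReal.ofReal (2 / K) := by
        -- `m / (m - K)² ≤ 2 / K` for `m ≥ 2K`, since `(2m - K)(m - 2K) ≥ 0`
        refine ENNReal.ofReal_le_ofReal ?_
        rw [div_le_div_iff₀ (by nlinarith) hK]
        rw [← hEN] at hsum
        nlinarith [mul_le_mul_of_nonneg_right hVN hK.le,
          mul_nonneg (by linarith : 0 ≤ 2 * μ[N] - K) (by linarith : 0 ≤ μ[N] - 2 * K)]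

theorem card_filter_Icc_one_eq_card_filter_fin (n : ℕ) (p : ℕ → Prop) [DecidablePred p] :
    #{i ∈ Finset.Icc 1 n | p i} = #{i : Fin n | p (i + 1)} := by
  symm
  refine Finset.card_bij (fun i _ => i.1 + 1) (fun i hi => ?_) (fun i _ j _ h => ?_)
    (fun j hj => ?_)
  · simp only [Finset.mem_filter, Finset.mem_univ, true_and, Finset.mem_Icc] at hi ⊢
    exact ⟨⟨by omega, i.2⟩, hi⟩
  · exact Fin.ext (by omega)
  · simp only [Finset.mem_filter, Finset.mem_Icc] at hj
    exact ⟨⟨j - 1, by omega⟩, by simpa [Nat.sub_add_cancel hj.1.1] using hj.2, by simp; omega⟩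

theorem IsDecOrderStat.lt_of_le_card {Ω : Type*} {X : ℕ → Ω → ℝ} {ord : ℕ → ℕ → Ω → ℝ}
    (hord : IsDecOrderStat X ord) {n j : ℕ} (hj : 1 ≤ j) {u : ℝ} {ω : Ω}
    (h : j ≤ #{i ∈ Finset.Icc 1 n | u < X i ω}) : u < ord n j ω := by
  obtain ⟨hanti, σ, hσ⟩ := hord ω n
  by_contra! hle
  have hperm : #{i : Fin n | u < ord n (i + 1) ω} = #{i : Fin n | u < X (i + 1) ω} :=
    Finset.card_equiv σ fun i => by simp [hσ i]
  have hfew : #{i : Fin n | u < ord n (i + 1) ω} ≤ j - 1 := by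
    calc #{i : Fin n | u < ord n (i + 1) ω}
        ≤ #(Finset.range (j - 1)) := by
          refine Finset.card_le_card_of_injOn (fun i => i.1) (fun i hi => ?_)
            Fin.val_injective.injOn
          simp only [Finset.coe_filter, Finset.mem_univ, true_and, mem_ofPred_eq] at hi
          by_contra! hij
          exact hi.not_ge ((hanti j (i + 1) hj (by simp at hij; omega) i.2).trans hle)
      _ = j - 1 := Finset.card_range _
  rw [card_filter_Icc_one_eq_card_filter_fin n (fun i => u < X i ω)] at h
  omega

namespace RegVaryingTail

variable {F : ℝ → ℝ} {α : ℝ}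

theorem tendsto_tail_ratio (hrv : RegVaryingTail F α) {x : ℝ} (hx : 0 < x) :
    Tendsto (fun t => (1 - F (t * x)) / (1 - F t)) atTop (𝓝 (x ^ (-α))) := by
  obtain ⟨L, hL, hslow⟩ := hrv
  have hlim := (hslow x hx).const_mul (x ^ (-α))
  rw [mul_one] at hlim
  refine hlim.congr' ?_
  filter_upwards [eventually_gt_atTop 0] with t ht
  rw [hL _ (mul_pos ht hx), hL t ht, mul_rpow ht.le hx.le, mul_assoc,
    mul_div_mul_left _ _ (rpow_pos_of_pos ht _).ne', mul_div_assoc]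

theorem exists_tail_ratio_bounds (hrv : RegVaryingTail F α) (hα : 0 < α) (hF : ∀ x, F x ≤ 1) :
    ∃ t₀ > 0, 0 < 1 - F t₀ ∧ (∀ t ≥ t₀, 1 - F (t * exp 1) ≤ exp (-(α / 2)) * (1 - F t)) ∧
      ∀ t ≥ t₀, 1 - F t ≤ exp (2 * α) * (1 - F (t * exp 1)) := by
  have hlim := hrv.tendsto_tail_ratio (exp_pos 1)
  rw [exp_one_rpow] at hlim
  obtain ⟨t₀, ht₀⟩ := eventually_atTop.1 <| (eventually_gt_atTop 0).and <|
    hlim.eventually (Ioo_mem_nhds (exp_lt_exp.2 (by linarith : -(2 * α) < -α))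
      (exp_lt_exp.2 (by linarith : -α < -(α / 2))))
  have hpos : ∀ t ≥ t₀, 0 < 1 - F t := fun t ht => by
    refine (sub_nonneg.2 (hF t)).lt_of_ne fun h => ?_
    have hlo := (ht₀ t ht).2.1
    rw [← h, div_zero] at hlo
    exact (exp_pos _).not_gt hlo
  refine ⟨t₀, (ht₀ t₀ le_rfl).1, hpos t₀ le_rfl, fun t ht => ?_, fun t ht => ?_⟩
  · exact ((div_lt_iff₀ (hpos t ht)).1 (ht₀ t ht).2.2).le
  · have hlo := (lt_div_iff₀ (hpos t ht)).1 (ht₀ t ht).2.1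
    rw [← div_le_iff₀' (exp_pos _), div_eq_mul_inv, ← exp_neg]
    linarith

end RegVaryingTail

theorem le_pow_mul_of_forall_le_mul {G : ℝ → ℝ} {t₀ ρ : ℝ} (ht₀ : 0 ≤ t₀) (hρ : 0 ≤ ρ)
    (h : ∀ t ≥ t₀, G (t * exp 1) ≤ ρ * G t) {t : ℝ} (ht : t₀ ≤ t) (j : ℕ) :
    G (t * exp j) ≤ ρ ^ j * G t := by
  induction j with
  | zero => simp
  | succ j ih =>
    have hj : t₀ ≤ t * exp j :=
      ht.trans (le_mul_of_one_le_right (ht₀.trans ht) (one_le_exp j.cast_nonneg))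
    calc G (t * exp ↑(j + 1)) = G (t * exp j * exp 1) := by rw [Nat.cast_succ, exp_add, mul_assoc]
      _ ≤ ρ * G (t * exp j) := h _ hj
      _ ≤ ρ ^ (j + 1) * G t := by rw [pow_succ', mul_assoc]; gcongr

theorem exists_lt_le_mul_of_le_mul_succ {G : ℕ → ℝ} {q C : ℝ} (h0 : q < G 0)
    (hex : ∃ j, G j ≤ q) (hstep : ∀ j, G j ≤ C * G (j + 1)) (hC : 0 ≤ C) :
    ∃ j, q < G j ∧ G j ≤ C * q := by
  classical
  have hpos : Nat.find hex ≠ 0 := fun h => h0.not_ge (h ▸ Nat.find_spec hex)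
  refine ⟨Nat.find hex - 1, lt_of_not_ge (Nat.find_min hex (by omega)), ?_⟩
  calc G (Nat.find hex - 1) ≤ C * G (Nat.find hex - 1 + 1) := hstep _
    _ ≤ C * q := by
      rw [Nat.sub_add_cancel (Nat.one_le_iff_ne_zero.2 hpos)]
      exact mul_le_mul_of_nonneg_left (Nat.find_spec hex) hC

theorem exists_ge_lt_le_mul {G : ℝ → ℝ} {t₀ ρ C q : ℝ} (ht₀ : 0 ≤ t₀) (hρ₀ : 0 ≤ ρ)
    (hρ₁ : ρ < 1) (hC : 0 ≤ C) (hdec : ∀ t ≥ t₀, G (t * exp 1) ≤ ρ * G t)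
    (hgrow : ∀ t ≥ t₀, G t ≤ C * G (t * exp 1)) (hq : 0 < q) (hq₀ : q < G t₀) :
    ∃ u ≥ t₀, q < G u ∧ G u ≤ C * q := by
  have hgrid : ∀ j : ℕ, t₀ ≤ t₀ * exp j :=
    fun j => le_mul_of_one_le_right ht₀ (one_le_exp j.cast_nonneg)
  have hex : ∃ j : ℕ, G (t₀ * exp j) ≤ q := by
    obtain ⟨j, hj⟩ := exists_pow_lt_of_lt_one (div_pos hq (hq.trans hq₀)) hρ₁
    rw [lt_div_iff₀ (hq.trans hq₀)] at hj
    exact ⟨j, (le_pow_mul_of_forall_le_mul ht₀ hρ₀ hdec le_rfl j).trans hj.le⟩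
  have hstep : ∀ j : ℕ, G (t₀ * exp j) ≤ C * G (t₀ * exp ↑(j + 1)) := fun j => by
    rw [Nat.cast_succ, exp_add, ← mul_assoc]
    exact hgrow _ (hgrid j)
  obtain ⟨j, hj, hjC⟩ := exists_lt_le_mul_of_le_mul_succ (G := fun j : ℕ => G (t₀ * exp j))
    (by simpa using hq₀) hex hstep hC
  exact ⟨t₀ * exp j, hgrid j, hj, hjC⟩

noncomputable def logSqMajorant (m : ℕ) (u x : ℝ) : ℝ≥0∞ :=
  ∑' j : ℕ, (Ioi (u * exp (j + m : ℕ))).indicator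
    (fun _ => ENNReal.ofReal (((j + m : ℕ) + 1 : ℝ) ^ 2)) x

noncomputable def sqGeomTail (ρ : ℝ) (m : ℕ) : ℝ≥0∞ :=
  ∑' j : ℕ, ENNReal.ofReal (((j + m : ℕ) + 1 : ℝ) ^ 2 * ρ ^ (j + m))

theorem ofReal_log_sq_le_logSqMajorant {m : ℕ} {u x : ℝ} (hu : 0 < u) (hx : u * exp m < x) :
    ENNReal.ofReal (log (x / u) ^ 2) ≤ logSqMajorant m u x := by
  have hxu : exp m < x / u := by rwa [lt_div_iff₀' hu]
  set s := log (x / u)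
  have hms : (m : ℝ) < s := by rwa [lt_log_iff_exp_lt ((exp_pos _).trans hxu)]
  have hceil : m < ⌈s⌉₊ := Nat.lt_ceil.2 hms
  set J := ⌈s⌉₊ - 1
  have hJs : (J : ℝ) < s := by
    have := Nat.ceil_lt_add_one ((m.cast_nonneg).trans hms.le)
    rw [Nat.cast_sub (by omega), Nat.cast_one]; linarith
  have hsJ : s ≤ J + 1 := by
    rw [Nat.cast_sub (by omega), Nat.cast_one, sub_add_cancel]; exact Nat.le_ceil s
  have hfire : x ∈ Ioi (u * exp J) := by
    rw [mem_Ioi, ← lt_div_iff₀' hu, ← exp_log ((exp_pos _).trans hxu)]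
    exact exp_lt_exp.2 hJs
  have hterm := ENNReal.le_tsum (f := fun j : ℕ => (Ioi (u * exp (j + m : ℕ))).indicator
    (fun _ => ENNReal.ofReal (((j + m : ℕ) + 1 : ℝ) ^ 2)) x) (J - m)
  simp only [Nat.sub_add_cancel (by omega : m ≤ J), indicator_of_mem hfire] at hterm
  exact (ENNReal.ofReal_le_ofReal (pow_le_pow_left₀ (m.cast_nonneg.trans hms.le) hsJ 2)).trans
    hterm

theorem tendsto_sqGeomTail {ρ : ℝ} (hρ₀ : 0 ≤ ρ) (hρ₁ : ρ < 1) :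
    Tendsto (sqGeomTail ρ) atTop (𝓝 0) := by
  have hnorm : ‖ρ‖ < 1 := by rwa [Real.norm_of_nonneg hρ₀]
  have hsum : Summable fun j : ℕ => ((j : ℝ) + 1) ^ 2 * ρ ^ j := by
    refine (((summable_pow_mul_geometric_of_norm_lt_one 2 hnorm).add
      ((summable_pow_mul_geometric_of_norm_lt_one 1 hnorm).mul_left 2)).add
      (summable_geometric_of_lt_one hρ₀ hρ₁)).congr fun j => ?_
    ring
  exact ENNReal.tendsto_sum_nat_add (fun j : ℕ => ENNReal.ofReal (((j : ℝ) + 1) ^ 2 * ρ ^ j))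
    (by rw [← ENNReal.ofReal_tsum_of_nonneg (fun j => by positivity) hsum]
        exact ENNReal.ofReal_ne_top)

theorem ofReal_log_sq_mul_ite_le_logSqMajorant {m : ℕ} {u o M x : ℝ} (hu : 0 < u)
    (huo : u ≤ o) (hM : exp m ≤ M) :
    ENNReal.ofReal (log (x / o) ^ 2 * if M * o < x then 1 else 0) ≤ logSqMajorant m u x := by
  split_ifs with hx
  · have ho : 0 < o := hu.trans_le huo
    have hxo : 1 ≤ x / o := by
      rw [le_div_iff₀ ho, one_mul]
      exact le_mul_of_one_le_left ho.le ((one_le_exp m.cast_nonneg).trans hM) |>.trans hx.le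
    have hx₀ : 0 < x := (div_pos_iff_of_pos_right ho).1 (zero_lt_one.trans_le hxo)
    have hlog : log (x / o) ≤ log (x / u) :=
      log_le_log (div_pos hx₀ ho) (div_le_div_of_nonneg_left hx₀.le hu huo)
    refine le_trans ?_ (ofReal_log_sq_le_logSqMajorant hu ?_)
    · rw [mul_one]
      exact ENNReal.ofReal_le_ofReal (pow_le_pow_left₀ (log_nonneg hxo) hlog 2)
    · calc u * exp m ≤ o * M := mul_le_mul huo hM (exp_pos _).le ho.le
        _ < x := by rwa [mul_comm]
  · simp

theorem measurable_logSqMajorant (m : ℕ) (u : ℝ) : Measurable (logSqMajorant m u) :=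
  Measurable.tsum fun _ => measurable_const.indicator measurableSet_Ioi

theorem lintegral_logSqMajorant_le {Ω : Type*} [MeasurableSpace Ω] {μ : Measure Ω}
    {Y : Ω → ℝ} (hY : Measurable Y) {m : ℕ} {u ρ p : ℝ} (hp : 0 ≤ p)
    (htail : ∀ J : ℕ, μ {ω | u * exp J < Y ω} ≤ ENNReal.ofReal (ρ ^ J * p)) :
    ∫⁻ ω, logSqMajorant m u (Y ω) ∂μ ≤ ENNReal.ofReal p * sqGeomTail ρ m := by
  simp only [logSqMajorant]
  rw [lintegral_tsum fun _ => ?_]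
  · calc ∑' j : ℕ, ∫⁻ ω, (Ioi (u * exp (j + m : ℕ))).indicator
            (fun _ => ENNReal.ofReal (((j + m : ℕ) + 1 : ℝ) ^ 2)) (Y ω) ∂μ
        = ∑' j : ℕ, ENNReal.ofReal (((j + m : ℕ) + 1 : ℝ) ^ 2) *
            μ {ω | u * exp (j + m : ℕ) < Y ω} := by
          simp only [lintegral_indicator_const_comp hY measurableSet_Ioi]
          rfl
      _ ≤ ∑' j : ℕ, ENNReal.ofReal (((j + m : ℕ) + 1 : ℝ) ^ 2) *
            ENNReal.ofReal (ρ ^ (j + m) * p) :=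
          ENNReal.tsum_le_tsum fun j => mul_le_mul_right (htail _) _
      _ = ENNReal.ofReal p * sqGeomTail ρ m := by
          rw [sqGeomTail, ← ENNReal.tsum_mul_left]
          congr 1 with j
          rw [← ENNReal.ofReal_mul (by positivity), ← ENNReal.ofReal_mul hp]
          ring_nf
  · exact ((measurable_const.indicator measurableSet_Ioi).comp hY).aemeasurable

theorem measure_le_sum_logSqMajorant_le {ι Ω : Type*} [MeasurableSpace Ω] {μ : Measure Ω}
    {Y : ι → Ω → ℝ} (hY : ∀ i, Measurable (Y i)) (s : Finset ι) {m : ℕ} {u ρ p c : ℝ}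
    (hp : 0 ≤ p) (hc : 0 < c)
    (htail : ∀ i (J : ℕ), μ {ω | u * exp J < Y i ω} ≤ ENNReal.ofReal (ρ ^ J * p)) :
    μ {ω | ENNReal.ofReal c ≤ ∑ i ∈ s, logSqMajorant m u (Y i ω)}
      ≤ ENNReal.ofReal (#s * p / c) * sqGeomTail ρ m := by
  have hmaj : ∀ i, Measurable fun ω => logSqMajorant m u (Y i ω) :=
    fun i => (measurable_logSqMajorant m u).comp (hY i)
  have hint : ∫⁻ ω, ∑ i ∈ s, logSqMajorant m u (Y i ω) ∂μ
      ≤ ENNReal.ofReal (#s * p) * sqGeomTail ρ m := by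
    rw [lintegral_finsetSum _ fun i _ => hmaj i, ENNReal.ofReal_mul (Nat.cast_nonneg _),
      ENNReal.ofReal_natCast, mul_assoc, ← nsmul_eq_mul, ← Finset.sum_const]
    exact Finset.sum_le_sum fun i _ => lintegral_logSqMajorant_le (hY i) hp (htail i)
  calc μ {ω | ENNReal.ofReal c ≤ ∑ i ∈ s, logSqMajorant m u (Y i ω)}
      ≤ (∫⁻ ω, ∑ i ∈ s, logSqMajorant m u (Y i ω) ∂μ) / ENNReal.ofReal c :=
        meas_ge_le_lintegral_div (Finset.measurable_sum _ fun i _ => hmaj i).aemeasurable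
          (by positivity) ENNReal.ofReal_ne_top
    _ ≤ ENNReal.ofReal (#s * p) * sqGeomTail ρ m / ENNReal.ofReal c := by gcongr
    _ = ENNReal.ofReal (#s * p / c) * sqGeomTail ρ m := by
        rw [ENNReal.mul_div_right_comm, ← ENNReal.ofReal_div_of_pos hc]

theorem measure_mul_lt_sum_log_sq_le {Ω : Type*} [MeasurableSpace Ω] {μ : Measure Ω}
    [IsProbabilityMeasure μ] {X : ℕ → Ω → ℝ} {F : ℝ → ℝ} {ord : ℕ → ℕ → Ω → ℝ}
    (hmeas : ∀ i, Measurable (X i)) (hindep : iIndepFun X μ)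
    (htail : ∀ i x, μ {ω | x < X i ω} = ENNReal.ofReal (1 - F x))
    (hord : IsDecOrderStat X ord) {n K m : ℕ} {u ρ C η M : ℝ} (hK : 0 < K) (hn : 0 < n)
    (hu : 0 < u) (hη : 0 < η) (hM : exp m ≤ M) (hlow : 2 * K / n < 1 - F u)
    (hup : 1 - F u ≤ C * (2 * K / n))
    (hdecay : ∀ j : ℕ, 1 - F (u * exp j) ≤ ρ ^ j * (1 - F u)) :
    μ {ω | η * K < ∑ i ∈ Finset.Icc 1 n,
        log (X i ω / ord n K ω) ^ 2 * (if M * ord n K ω < X i ω then 1 else 0)}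
      ≤ ENNReal.ofReal (2 / K) + ENNReal.ofReal (2 * C / η) * sqGeomTail ρ m := by
  have hK' : (0 : ℝ) < K := Nat.cast_pos.2 hK
  have hn' : (0 : ℝ) < n := Nat.cast_pos.2 hn
  have hp : 0 ≤ 1 - F u := (div_nonneg (by positivity) hn'.le).trans hlow.le
  have hsplit : {ω | η * K < ∑ i ∈ Finset.Icc 1 n,
        log (X i ω / ord n K ω) ^ 2 * (if M * ord n K ω < X i ω then 1 else 0)}
      ⊆ {ω | (#{i ∈ Finset.Icc 1 n | u < X i ω} : ℝ) < K} ∪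
        {ω | ENNReal.ofReal (η * K) ≤ ∑ i ∈ Finset.Icc 1 n, logSqMajorant m u (X i ω)} := by
    intro ω hω
    by_cases hcount : (K : ℝ) ≤ #{i ∈ Finset.Icc 1 n | u < X i ω}
    · right
      have huo := (hord.lt_of_le_card hK (Nat.cast_le.1 hcount)).le
      calc ENNReal.ofReal (η * K) ≤ ENNReal.ofReal (∑ i ∈ Finset.Icc 1 n,
            log (X i ω / ord n K ω) ^ 2 * (if M * ord n K ω < X i ω then 1 else 0)) :=
          ENNReal.ofReal_le_ofReal hω.le
        _ = ∑ i ∈ Finset.Icc 1 n, ENNReal.ofReal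
            (log (X i ω / ord n K ω) ^ 2 * (if M * ord n K ω < X i ω then 1 else 0)) :=
          ENNReal.ofReal_sum_of_nonneg fun i _ => by positivity
        _ ≤ ∑ i ∈ Finset.Icc 1 n, logSqMajorant m u (X i ω) :=
          Finset.sum_le_sum fun i _ => ofReal_log_sq_mul_ite_le_logSqMajorant hu huo hM
    · exact Or.inl (not_le.1 hcount)
  have hcard : (#(Finset.Icc 1 n) : ℝ) = n := by simp
  have hcheb :
      μ {ω | (#{i ∈ Finset.Icc 1 n | u < X i ω} : ℝ) < K} ≤ ENNReal.ofReal (2 / K) := by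
    refine measure_card_lt_le_of_iIndepFun hmeas hindep _ u hK' ?_
    simp only [measureReal_def, htail, ENNReal.toReal_ofReal hp, Finset.sum_const, nsmul_eq_mul,
      hcard]
    rw [div_lt_iff₀' hn'] at hlow
    exact hlow.le
  have hmarkov := measure_le_sum_logSqMajorant_le hmeas (Finset.Icc 1 n) (m := m) hp
    (mul_pos hη hK') fun i J => by rw [htail]; exact ENNReal.ofReal_le_ofReal (hdecay J)
  refine (measure_mono hsplit).trans ((measure_union_le _ _).trans
    (add_le_add hcheb (hmarkov.trans ?_)))
  gcongr ?_ * _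
  refine ENNReal.ofReal_le_ofReal ?_
  rw [hcard, div_le_div_iff₀ (mul_pos hη hK') hη]
  rw [mul_div_assoc', le_div_iff₀' hn'] at hup
  nlinarith

theorem tendsto_limsup_of_le_add {β : Type*} {l : Filter β} {a : β → ℕ → ℝ≥0∞}
    {b c : ℕ → ℝ≥0∞} (hb : Tendsto b atTop (𝓝 0)) (hc : Tendsto c atTop (𝓝 0))
    (h : ∀ m, ∀ᶠ M in l, ∀ᶠ n in atTop, a M n ≤ b n + c m) :
    Tendsto (fun M => limsup (a M) atTop) l (𝓝 0) := by
  rw [ENNReal.tendsto_nhds_zero]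
  intro ε hε
  have hε₂ : Iic (ε / 2) ∈ 𝓝 0 := Iic_mem_nhds (ENNReal.half_pos hε.ne')
  obtain ⟨m, hm⟩ := (hc.eventually hε₂).exists
  filter_upwards [h m] with M hM
  refine limsup_le_of_le (by isBoundedDefault) ?_
  filter_upwards [hM, hb.eventually hε₂] with n hn hbn
  calc a M n ≤ b n + c m := hn
    _ ≤ ε / 2 + ε / 2 := add_le_add hbn hm
    _ = ε := ENNReal.add_halves ε

theorem tail_functional_negligible_general {Ω : Type*} [MeasurableSpace Ω]
    (μ : Measure Ω) [IsProbabilityMeasure μ]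
    (X : ℕ → Ω → ℝ) (F : ℝ → ℝ) (α : ℝ) (hα : 0 < α)
    (ord : ℕ → ℕ → Ω → ℝ) (k : ℕ → ℕ)
    (hmeas : ∀ i, Measurable (X i))
    (hindep : iIndepFun X μ)
    (hcdf : ∀ i x, (μ {ω | X i ω ≤ x}).toReal = F x)
    (hrv : RegVaryingTail F α)
    (hord : IsDecOrderStat X ord)
    (hk : Tendsto k atTop atTop)
    (hkn : Tendsto (fun n => (k n : ℝ) / (n : ℝ)) atTop (nhds 0))
    (T : ℕ → ℝ → Ω → ℝ)
    (hT : ∀ n M ω, T n M ω = (1 / (k n : ℝ)) * ∑ i ∈ Finset.Icc 1 n,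
        (Real.log (X i ω / ord n (k n) ω)) ^ 2 *
          (if M * ord n (k n) ω < X i ω then 1 else 0)) :
    ∀ η > (0:ℝ),
      Tendsto (fun M : ℝ => Filter.limsup (fun n => μ {ω | η < T n M ω}) atTop)
        atTop (nhds 0) := by
  intro η hη
  have htail := fun i => measure_lt_eq_ofReal_one_sub (hmeas i) (hcdf i)
  have hF : ∀ x, F x ≤ 1 := fun x => hcdf 0 x ▸ measureReal_le_one
  obtain ⟨t₀, ht₀, htail₀, hdec, hgrow⟩ := hrv.exists_tail_ratio_bounds hα hF
  have hρ₁ : exp (-(α / 2)) < 1 := exp_lt_one_iff.2 (by linarith)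
  refine tendsto_limsup_of_le_add (b := fun n => ENNReal.ofReal (2 / k n))
    (c := fun m => ENNReal.ofReal (2 * exp (2 * α) / η) * sqGeomTail (exp (-(α / 2))) m)
    ?_ ?_ fun m => ?_
  · simpa using ENNReal.tendsto_ofReal
      ((tendsto_natCast_atTop_atTop.comp hk).const_div_atTop 2)
  · simpa using ENNReal.Tendsto.const_mul (tendsto_sqGeomTail (exp_pos _).le hρ₁)
      (Or.inr ENNReal.ofReal_ne_top)
  filter_upwards [eventually_ge_atTop (exp m)] with M hM
  filter_upwards [hk.eventually_gt_atTop 0, eventually_gt_atTop 0,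
    (hkn.const_mul 2).eventually (gt_mem_nhds (by rwa [mul_zero]))] with n hkpos hnpos hsmall
  rw [← mul_div_assoc] at hsmall
  obtain ⟨u, hu, hlow, hup⟩ := exists_ge_lt_le_mul ht₀.le (exp_pos _).le hρ₁ (exp_pos _).le
    hdec hgrow (by positivity) hsmall
  have hevent : {ω | η < T n M ω} = {ω | η * k n < ∑ i ∈ Finset.Icc 1 n,
      log (X i ω / ord n (k n) ω) ^ 2 * (if M * ord n (k n) ω < X i ω then 1 else 0)} := by
    ext ω
    rw [mem_ofPred_eq, mem_ofPred_eq, hT, one_div, ← div_eq_inv_mul,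
      lt_div_iff₀ (by positivity)]
  rw [hevent]
  exact measure_mul_lt_sum_log_sq_le hmeas hindep htail hord hkpos hnpos (ht₀.trans_le hu) hη
    hM hlow hup
    (le_pow_mul_of_forall_le_mul (G := fun t => 1 - F t) ht₀.le (exp_pos _).le hdec hu)

/-- For iid nonnegative `X i` with regularly varying tail of index
`-α` and `k n → ∞`, `k n / n → 0`, the tail functional
`T_{n,M} = (1/k) ∑_{i=1}^n (log(X i / X_{(k)}))² 1{X i > M X_{(k)}}` satisfies
`lim_{M → ∞} limsup_{n → ∞} P[T_{n,M} > η] = 0` for every `η > 0`. -/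
theorem tail_functional_negligible {Ω : Type*} [MeasurableSpace Ω]
    (μ : Measure Ω) [IsProbabilityMeasure μ]
    (X : ℕ → Ω → ℝ) (F : ℝ → ℝ) (α : ℝ) (hα : 0 < α)
    (ord : ℕ → ℕ → Ω → ℝ) (k : ℕ → ℕ)
    (hmeas : ∀ i, Measurable (X i))
    (hindep : iIndepFun X μ)
    (hnonneg : ∀ i ω, 0 ≤ X i ω)
    (hcdf : ∀ i x, (μ {ω | X i ω ≤ x}).toReal = F x)
    (hrv : RegVaryingTail F α)
    (hord : IsDecOrderStat X ord)
    (hk : Tendsto k atTop atTop)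
    (hkn : Tendsto (fun n => (k n : ℝ) / (n : ℝ)) atTop (nhds 0))
    (T : ℕ → ℝ → Ω → ℝ)
    (hT : ∀ n M ω, T n M ω = (1 / (k n : ℝ)) * ∑ i ∈ Finset.Icc 1 n,
        (Real.log (X i ω / ord n (k n) ω)) ^ 2 *
          (if M * ord n (k n) ω < X i ω then 1 else 0)) :
    ∀ η > (0:ℝ),
      Tendsto (fun M : ℝ => Filter.limsup (fun n => μ {ω | η < T n M ω}) atTop)
        atTop (nhds 0) :=
  tail_functional_negligible_general μ X F α hα ord k hmeas hindep hcdf hrv hord hk hkn T hT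
end
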